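/- Let G be a d-regular graph on n vertices and let p ≤ 2/d. Form G_p by retaining each edge independently with probability p. Then with high probability, every vertex subset S with |S| = k ≥ ln n that spans a connected subgraph of G_p satisfies e_{G_p}(S) + e_{G_p}(S, Sᶜ) < 10k, i.e., the total number of edges of G_p incident to S is less than 10|S|. -/

import Mathlib

open MeasureTheory Filter Real

section Defs

variable {V : Type*}

def SimpleGraph.percGraph (G : SimpleGraph V) [DecidableRel G.Adj]
    (ω : Sym2 V → Bool) : SimpleGraph V where
  Adj u v := G.Adj u v ∧ ω s(u, v) = true
  symm.symm u v h := ⟨h.1.symm, by rw [Sym2.eq_swap]; exact h.2⟩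
  loopless.irrefl v h := G.loopless.irrefl v h.1

instance {G : SimpleGraph V} [DecidableRel G.Adj] {ω : Sym2 V → Bool} :
    DecidableRel (G.percGraph ω).Adj := fun u v =>
  inferInstanceAs (Decidable (G.Adj u v ∧ ω s(u, v) = true))

noncomputable def percMeasure (V : Type*) [Fintype V] [DecidableEq V] (p : ℝ) :
    Measure (Sym2 V → Bool) :=
  Measure.pi fun _ => (PMF.bernoulli (min (Real.toNNReal p) 1) (min_le_right _ _)).toMeasure

def IsNDLGraph [Fintype V] (G : SimpleGraph V) [DecidableRel G.Adj] (d : ℕ) (lam : ℝ) : Prop :=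
  G.IsRegularOfDegree d ∧
  ∀ f : V → ℝ, (∑ v, f v = 0) →
    ∑ v, ((G.adjMatrix ℝ).mulVec f v) ^ 2 ≤ lam ^ 2 * ∑ v, (f v) ^ 2

def epairs [Fintype V] (H : SimpleGraph V) [DecidableRel H.Adj] (A B : Finset V) : ℕ :=
  ∑ a ∈ A, ∑ b ∈ B, if H.Adj a b then 1 else 0

def extNbhd [Fintype V] [DecidableEq V] (H : SimpleGraph V) [DecidableRel H.Adj]
    (S : Finset V) : Finset V :=
  Finset.univ.filter fun v => v ∉ S ∧ ∃ u ∈ S, H.Adj u v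

def IsLargestComponent (H : SimpleGraph V) (K : Set V) : Prop :=
  (∃ C : H.ConnectedComponent, K = C.supp) ∧
  ∀ C' : H.ConnectedComponent, C'.supp.ncard ≤ K.ncard

noncomputable def gball [Fintype V] (H : SimpleGraph V) (v : V) (r : ℕ) : Finset V :=
  Finset.univ.filter fun u => H.dist v u ≤ r

end Defs

/-!
If some connected set `S` of `k ≥ log n` vertices of `G_p` meets at least `10k` open edges, then
`10k` specific edges are open: the `k - 1` edges of a spanning tree of `S`, and `9k + 1` further
edges among the at most `dk` edges of `G` at `S`. A spanning tree is recorded by a depth-first code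
(a start vertex and a word of length `2(k - 1)` over `{back} ∪ Fin d` with `k - 1` forward letters),
so there are at most `n · 4^(k-1) d^(k-1) · C(dk, 9k+1)` candidate edge sets, each open with
probability at most `(2/d)^(10k)`. The product is at most `n · 10^(-k)`, and summing over
`k ≥ log n` bounds the failure probability by `(10/9) / n`.
-/

open Finset
open scoped ENNReal

section Percolation

variable {V : Type*} [Fintype V] [DecidableEq V]

instance (p : ℝ) : IsProbabilityMeasure (percMeasure V p) := by
  unfold percMeasure
  infer_instance

lemma percMeasure_forall_mem_le (p : ℝ) (D : Finset (Sym2 V)) :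
    percMeasure V p {ω | ∀ e ∈ D, ω e = true} ≤ ENNReal.ofReal p ^ #D := by
  have hD : {ω : Sym2 V → Bool | ∀ e ∈ D, ω e = true} =
      Set.univ.pi fun e => if e ∈ D then {true} else Set.univ := by
    ext ω
    simp only [Set.mem_ofPred_eq, Set.mem_univ_pi]
    refine forall_congr' fun e => ?_
    split_ifs <;> simp [*]
  rw [hD, percMeasure, Measure.pi_pi]
  simp only [apply_ite, measure_univ, PMF.toMeasure_apply_singleton _ _ (measurableSet_singleton _),
    prod_ite_mem, univ_inter, prod_const]
  gcongr
  exact ENNReal.coe_le_coe.mpr (min_le_left _ _)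

lemma percMeasure_biUnion_le (p : ℝ) (𝒟 : Finset (Finset (Sym2 V))) (m : ℕ)
    (h𝒟 : ∀ D ∈ 𝒟, #D = m) :
    percMeasure V p (⋃ D ∈ 𝒟, {ω | ∀ e ∈ D, ω e = true}) ≤ #𝒟 * ENNReal.ofReal p ^ m := by
  calc _ ≤ ∑ D ∈ 𝒟, percMeasure V p {ω | ∀ e ∈ D, ω e = true} := measure_biUnion_finset_le _ _
    _ ≤ ∑ _D ∈ 𝒟, ENNReal.ofReal p ^ m :=
      sum_le_sum fun D hD => (h𝒟 D hD) ▸ percMeasure_forall_mem_le p D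
    _ = #𝒟 * ENNReal.ofReal p ^ m := by rw [sum_const, nsmul_eq_mul]

end Percolation

lemma List.countP_ofFn {α : Type*} {N : ℕ} (m : Fin N → α) (p : α → Bool) :
    (List.ofFn m).countP p = #{i | p (m i)} := by
  simp [List.ofFn_eq_map, List.countP_eq_length_filter, Fin.univ_def, card_def, List.filter_map,
    Function.comp_def]

lemma card_filter_card_isSome_le (N r d : ℕ) :
    #{m : Fin N → Option (Fin d) | #{i | (m i).isSome} = r} ≤ N.choose r * d ^ r := by
  set supp : (Fin N → Option (Fin d)) → Finset (Fin N) := fun m => {i | (m i).isSome}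
  rw [card_eq_sum_card_fiberwise (f := supp) (t := powersetCard r univ)
    fun m hm => mem_powersetCard.2 ⟨subset_univ _, by simpa using hm⟩]
  calc _ ≤ ∑ _s ∈ powersetCard r (univ : Finset (Fin N)), d ^ r := sum_le_sum fun s hs => ?_
    _ = N.choose r * d ^ r := by simp
  have hnone : ∀ m, supp m = s → ∀ i ∉ s, m i = none := by
    rintro m rfl i hi
    simpa [supp] using hi
  calc _ ≤ #(s.pi fun _ => univ.map Function.Embedding.some) := by
        refine card_le_card_of_injOn (fun m i _ => m i) (fun m hm => ?_) fun m₁ hm₁ m₂ hm₂ h => ?_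
        · obtain rfl := (mem_filter.1 hm).2
          simp only [mem_coe, Finset.mem_pi, Finset.mem_map, mem_univ, true_and, supp, mem_filter]
          exact fun i hi => Option.isSome_iff_exists.1 hi |>.imp fun _ => Eq.symm
        · funext i
          by_cases hi : i ∈ s
          · exact congrFun₂ h i hi
          · rw [hnone m₁ (mem_filter.1 hm₁).2 i hi, hnone m₂ (mem_filter.1 hm₂).2 i hi]
    _ = d ^ r := by simp [(mem_powersetCard.1 hs).2]

/-- A depth-first walk: `stack` is the way back to the start; `edges` and `visited` record the
forward edges and the vertices reached, latest first. -/
structure TourState (V : Type*) where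
  cur : V
  stack : List V
  edges : List (Sym2 V)
  visited : List V

namespace TourState

variable {V : Type*} {d : ℕ} (nbr : V → Fin d → V)

def start (v : V) : TourState V := ⟨v, [], [], [v]⟩

def step (s : TourState V) : Option (Fin d) → TourState V
  | some j => ⟨nbr s.cur j, s.cur :: s.stack, s(s.cur, nbr s.cur j) :: s.edges,
      nbr s.cur j :: s.visited⟩
  | none =>
    match s.stack with
    | [] => s
    | x :: st => ⟨x, st, s.edges, x :: s.visited⟩

def run (s : TourState V) (c : List (Option (Fin d))) : TourState V := c.foldl (step nbr) s

@[simp] lemma run_nil (s : TourState V) : run nbr s [] = s := rfl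

@[simp] lemma run_cons (s : TourState V) (o : Option (Fin d)) (c : List (Option (Fin d))) :
    run nbr s (o :: c) = run nbr (step nbr s o) c := rfl

lemma run_append (s : TourState V) (c₁ c₂ : List (Option (Fin d))) :
    run nbr s (c₁ ++ c₂) = run nbr (run nbr s c₁) c₂ :=
  List.foldl_append ..

lemma run_mk (c : List (Option (Fin d))) (a : V) (st : List V) (es : List (Sym2 V))
    (vs : List V) :
    run nbr ⟨a, st, es, vs⟩ c =
      ⟨(run nbr ⟨a, st, [], []⟩ c).cur, (run nbr ⟨a, st, [], []⟩ c).stack,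
        (run nbr ⟨a, st, [], []⟩ c).edges ++ es, (run nbr ⟨a, st, [], []⟩ c).visited ++ vs⟩ := by
  induction c generalizing a st es vs with
  | nil => simp
  | cons o c ih =>
    match o, st with
    | some j, st =>
      simp only [run_cons, step]
      rw [ih, ih (nbr a j) (a :: st) [s(a, nbr a j)] [nbr a j]]
      simp
    | none, [] => exact ih a [] es vs
    | none, x :: st =>
      simp only [run_cons, step]
      rw [ih, ih x st [] [x]]
      simp

lemma exists_prefix_of_mem_visited {c : List (Option (Fin d))} {s : TourState V} {z : V}
    (hz : z ∈ (run nbr s c).visited) :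
    z ∈ s.visited ∨ ∃ c₁ c₂, c = c₁ ++ c₂ ∧ (run nbr s c₁).cur = z := by
  induction c generalizing s with
  | nil => exact Or.inl hz
  | cons o c ih =>
    rcases ih hz with hz | ⟨c₁, c₂, rfl, hc₁⟩
    · match o, s with
      | some j, ⟨a, st, es, vs⟩ =>
        rcases List.mem_cons.1 hz with rfl | hz
        · exact Or.inr ⟨[some j], c, rfl, rfl⟩
        · exact Or.inl hz
      | none, ⟨a, [], es, vs⟩ => exact Or.inl hz
      | none, ⟨a, x :: st, es, vs⟩ =>
        rcases List.mem_cons.1 hz with rfl | hz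
        · exact Or.inr ⟨[none], c, rfl, rfl⟩
        · exact Or.inl hz
    · exact Or.inr ⟨o :: c₁, c₂, rfl, hc₁⟩

variable [DecidableEq V]

lemma run_detour {s : TourState V} {c₁ : List (Option (Fin d))} {x : V}
    (hx : (run nbr s c₁).cur = x) (j : Fin d) (c₂ : List (Option (Fin d))) :
    (run nbr s (c₁ ++ some j :: none :: c₂)).edges.toFinset =
        insert s(x, nbr x j) (run nbr s (c₁ ++ c₂)).edges.toFinset ∧
      (run nbr s (c₁ ++ some j :: none :: c₂)).visited.toFinset =
        insert x (insert (nbr x j) (run nbr s (c₁ ++ c₂)).visited.toFinset) := by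
  rw [run_append, run_append]
  generalize run nbr s c₁ = r at hx ⊢
  obtain ⟨a, st, es, vs⟩ := r
  obtain rfl : a = x := hx
  simp only [run_cons, step]
  rw [run_mk, run_mk nbr c₂ a st es vs]
  constructor <;> ext <;> simp

end TourState

lemma SimpleGraph.exists_adj_of_connected_induce {V : Type*} {H : SimpleGraph V} {S T : Set V}
    (hS : (H.induce S).Connected) {v w : V} (hvS : v ∈ S) (hvT : v ∈ T) (hwS : w ∈ S)
    (hwT : w ∉ T) : ∃ x ∈ T, ∃ u ∈ S, u ∉ T ∧ H.Adj x u := by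
  obtain ⟨p⟩ := hS.preconnected ⟨v, hvS⟩ ⟨w, hwS⟩
  obtain ⟨e, -, hfst, hsnd⟩ := p.exists_boundary_dart {y | ↑y ∈ T} (by exact hvT) (by exact hwT)
  exact ⟨e.fst, hfst, e.snd, e.snd.2, hsnd, e.adj⟩

section TreeCode

open TourState

variable {V : Type*} [DecidableEq V] {d : ℕ} (nbr : V → Fin d → V) (H : SimpleGraph V)

/-- `c` encodes a depth-first traversal, from `v`, of a spanning tree of `H` on `T`. -/
structure IsTreeCode (v : V) (T : Finset V) (c : List (Option (Fin d))) : Prop where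
  visited_eq : (run nbr (start v) c).visited.toFinset = T
  edges_subset : ∀ e ∈ (run nbr (start v) c).edges, e ∈ H.edgeSet ∧ ∀ z ∈ e, z ∈ T
  card_edges : #(run nbr (start v) c).edges.toFinset = #T - 1
  length_eq : c.length = 2 * (#T - 1)
  countP_isSome : c.countP Option.isSome = #T - 1

lemma isTreeCode_nil (v : V) : IsTreeCode nbr H v {v} [] :=
  ⟨by simp [start], by simp [start], by simp [start], rfl, rfl⟩

variable {nbr H}

lemma IsTreeCode.exists_insert {v x u : V} {j : Fin d} {T : Finset V}
    {c : List (Option (Fin d))} (hc : IsTreeCode nbr H v T c) (hx : x ∈ T) (hu : u ∉ T)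
    (hxu : H.Adj x u) (hj : nbr x j = u) : ∃ c', IsTreeCode nbr H v (insert u T) c' := by
  obtain ⟨c₁, c₂, rfl, hc₁⟩ : ∃ c₁ c₂, c = c₁ ++ c₂ ∧ (run nbr (start v) c₁).cur = x := by
    rw [← hc.visited_eq, List.mem_toFinset] at hx
    rcases exists_prefix_of_mem_visited nbr hx with hx | h
    · exact ⟨[], c, rfl, by simpa [start, eq_comm] using hx⟩
    · exact h
  obtain ⟨hE, hV⟩ := run_detour nbr hc₁ j c₂
  rw [hj] at hE hV
  have hxu_new : s(x, u) ∉ (run nbr (start v) (c₁ ++ c₂)).edges.toFinset := fun h =>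
    hu ((hc.edges_subset _ (List.mem_toFinset.1 h)).2 u (Sym2.mem_mk_right x u))
  have hT : 1 ≤ #T := card_pos.2 ⟨x, hx⟩
  refine ⟨c₁ ++ some j :: none :: c₂, ⟨?_, fun e he => ?_, ?_, ?_, ?_⟩⟩
  · rw [hV, hc.visited_eq, insert_eq_of_mem (mem_insert_of_mem hx)]
  · rw [← List.mem_toFinset, hE, mem_insert] at he
    rcases he with rfl | he
    · refine ⟨hxu, fun z hz => ?_⟩
      rcases Sym2.mem_iff.1 hz with rfl | rfl
      exacts [mem_insert_of_mem hx, mem_insert_self _ _]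
    · obtain ⟨he, hzT⟩ := hc.edges_subset e (List.mem_toFinset.1 he)
      exact ⟨he, fun z hz => mem_insert_of_mem (hzT z hz)⟩
  · rw [hE, card_insert_of_notMem hxu_new, hc.card_edges, card_insert_of_notMem hu]
    omega
  · have := hc.length_eq
    simp only [List.length_append, List.length_cons] at this ⊢
    rw [card_insert_of_notMem hu]
    omega
  · have := hc.countP_isSome
    simp only [List.countP_append, List.countP_cons, Option.isSome_some, Option.isSome_none]
      at this ⊢
    simp only [Bool.false_eq_true, if_true, if_false]
    rw [card_insert_of_notMem hu]
    omega

theorem exists_isTreeCode (hnbr : ∀ x u, H.Adj x u → ∃ j, nbr x j = u) {S : Finset V}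
    (hS : (H.induce (S : Set V)).Connected) {v : V} (hv : v ∈ S) :
    ∃ c, IsTreeCode nbr H v S c := by
  suffices ∀ n, ∀ T ⊆ S, v ∈ T → #S - #T = n → (∃ c, IsTreeCode nbr H v T c) →
      ∃ c, IsTreeCode nbr H v S c from
    this _ {v} (singleton_subset_iff.2 hv) (mem_singleton_self v) rfl ⟨[], isTreeCode_nil nbr H v⟩
  intro n
  induction n with
  | zero =>
    intro T hTS _ hn hT
    rwa [eq_of_subset_of_card_le hTS (by omega)] at hT
  | succ n ih =>
    rintro T hTS hvT hn ⟨c, hc⟩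
    obtain ⟨w, hwS, hwT⟩ := not_subset.1 fun h : S ⊆ T => by
      have := card_le_card h
      omega
    obtain ⟨x, hxT, u, huS, huT, hxu⟩ :=
      SimpleGraph.exists_adj_of_connected_induce hS hv hvT (T := (T : Set V)) hwS hwT
    obtain ⟨j, hj⟩ := hnbr x u hxu
    refine ih _ (insert_subset huS hTS) (mem_insert_of_mem hvT) ?_ (hc.exists_insert hxT huT hxu hj)
    rw [card_insert_of_notMem huT]
    omega

end TreeCode

lemma Sym2.card_filter_mk_eq_le_two {V : Type*} [DecidableEq V] (P : Finset (V × V))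
    (e : Sym2 V) : #{ab ∈ P | s(ab.1, ab.2) = e} ≤ 2 := by
  induction e with
  | _ a b =>
    calc _ ≤ #({(a, b), (b, a)} : Finset (V × V)) := card_le_card fun ab hab => by
          obtain ⟨x, y⟩ := ab
          have := Sym2.eq_iff.1 (mem_filter.1 hab).2
          simp only [mem_insert, mem_singleton, Prod.mk.injEq]
          tauto
      _ ≤ 2 := card_le_two

section IncidentEdges

variable {V : Type*} [Fintype V]

lemma epairs_eq_card (H : SimpleGraph V) [DecidableRel H.Adj] (A B : Finset V) :
    epairs H A B = #{ab ∈ A ×ˢ B | H.Adj ab.1 ab.2} := by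
  rw [card_filter, sum_product]
  rfl

lemma epairs_comm (H : SimpleGraph V) [DecidableRel H.Adj] (A B : Finset V) :
    epairs H A B = epairs H B A := by
  unfold epairs
  rw [sum_comm]
  simp only [H.adj_comm]

variable [DecidableEq V]

lemma epairs_add_epairs_compl (H : SimpleGraph V) [DecidableRel H.Adj] (A B : Finset V) :
    epairs H A B + epairs H A Bᶜ = epairs H A univ := by
  unfold epairs
  rw [← sum_add_distrib]
  exact sum_congr rfl fun a _ => sum_add_sum_compl B _

def SimpleGraph.incidentEdges (H : SimpleGraph V) [DecidableRel H.Adj] (S : Finset V) :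
    Finset (Sym2 V) :=
  S.biUnion fun z => H.incidenceFinset z

/-- The left side counts the ordered pairs of adjacent vertices meeting `S`; at most two of them
give the same edge. -/
lemma epairs_add_two_mul_epairs_compl_le (H : SimpleGraph V) [DecidableRel H.Adj]
    (S : Finset V) : epairs H S S + 2 * epairs H S Sᶜ ≤ 2 * #(H.incidentEdges S) := by
  have hdisj : Disjoint (S ×ˢ (univ : Finset V)) (Sᶜ ×ˢ S) :=
    disjoint_product.2 (Or.inl disjoint_compl_right)
  calc epairs H S S + 2 * epairs H S Sᶜ = epairs H S univ + epairs H Sᶜ S := by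
        rw [← epairs_add_epairs_compl H S S, epairs_comm H Sᶜ S]
        ring
    _ = #{ab ∈ S ×ˢ univ ∪ Sᶜ ×ˢ S | H.Adj ab.1 ab.2} := by
        rw [epairs_eq_card, epairs_eq_card, filter_union,
          card_union_of_disjoint (disjoint_filter_filter hdisj)]
    _ ≤ 2 * #(H.incidentEdges S) := by
        refine card_le_mul_card_image_of_maps_to (f := fun ab => s(ab.1, ab.2)) ?_ 2
          fun e _ => Sym2.card_filter_mk_eq_le_two _ e
        rintro ⟨a, b⟩ hab
        simp only [mem_filter, mem_union, mem_product, mem_univ, and_true, mem_compl] at hab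
        simp only [SimpleGraph.incidentEdges, mem_biUnion, SimpleGraph.mem_incidenceFinset,
          SimpleGraph.incidenceSet, Set.mem_ofPred_eq, SimpleGraph.mem_edgeSet, Sym2.mem_iff]
        rcases hab with ⟨ha | ⟨-, hb⟩, hadj⟩
        exacts [⟨a, ha, hadj, Or.inl rfl⟩, ⟨b, hb, hadj, Or.inr rfl⟩]

lemma SimpleGraph.card_incidentEdges_le {G : SimpleGraph V} [DecidableRel G.Adj] {d : ℕ}
    (hdeg : ∀ v, G.degree v ≤ d) (S : Finset V) : #(G.incidentEdges S) ≤ d * #S :=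
  calc _ ≤ ∑ z ∈ S, #(G.incidenceFinset z) := card_biUnion_le
    _ ≤ ∑ _z ∈ S, d := sum_le_sum fun z _ => (G.card_incidenceFinset_eq_degree z).trans_le (hdeg z)
    _ = d * #S := by rw [sum_const, smul_eq_mul, mul_comm]

lemma SimpleGraph.incidentEdges_subset_edgeSet (H : SimpleGraph V) [DecidableRel H.Adj]
    (S : Finset V) : ↑(H.incidentEdges S) ⊆ H.edgeSet := by
  intro e he
  obtain ⟨z, -, he⟩ := mem_biUnion.1 he
  exact ((H.mem_incidenceFinset z e).1 he).1

lemma SimpleGraph.incidentEdges_mono {H G : SimpleGraph V} [DecidableRel H.Adj] [DecidableRel G.Adj]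
    (hHG : H ≤ G) (S : Finset V) : H.incidentEdges S ⊆ G.incidentEdges S :=
  biUnion_mono fun z _ e he => by
    rw [SimpleGraph.mem_incidenceFinset] at he ⊢
    exact ⟨SimpleGraph.edgeSet_mono hHG he.1, he.2⟩

end IncidentEdges

section Witnesses

open TourState

variable {V : Type*} [Fintype V]

noncomputable def SimpleGraph.labeledNeighbor (G : SimpleGraph V) [DecidableRel G.Adj] (d : ℕ)
    (v : V) (j : Fin d) : V :=
  if h : (j : ℕ) < G.degree v then (G.neighborFinset v).equivFin.symm ⟨j, h⟩ else v

lemma SimpleGraph.exists_labeledNeighbor_eq {G : SimpleGraph V} [DecidableRel G.Adj] {d : ℕ}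
    (hdeg : ∀ v, G.degree v ≤ d) {v u : V} (h : G.Adj v u) :
    ∃ j, G.labeledNeighbor d v j = u := by
  set i := (G.neighborFinset v).equivFin ⟨u, (G.mem_neighborFinset v u).2 h⟩
  refine ⟨⟨i, i.2.trans_le ((G.card_neighborFinset_eq_degree v).trans_le (hdeg v))⟩, ?_⟩
  rw [labeledNeighbor, dif_pos (by exact i.2)]
  exact congrArg Subtype.val ((G.neighborFinset v).equivFin.symm_apply_apply _)

variable [DecidableEq V] (G : SimpleGraph V) [DecidableRel G.Adj] (d k : ℕ)

noncomputable def codeTour (vm : V × (Fin (2 * (k - 1)) → Option (Fin d))) : TourState V :=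
  run (G.labeledNeighbor d) (start vm.1) (List.ofFn vm.2)

noncomputable def treeCodes : Finset (V × (Fin (2 * (k - 1)) → Option (Fin d))) :=
  {vm ∈ (univ : Finset V) ×ˢ ({m | #{i | (m i).isSome} = k - 1} : Finset _) |
    #(codeTour G d k vm).visited.toFinset ≤ k}

/-- The edges of the tree traversed by a code, together with `9k + 1` further edges of `G` at the
vertices of that tree. -/
noncomputable def witnesses : Finset (Finset (Sym2 V)) :=
  {D ∈ (treeCodes G d k).biUnion fun vm =>
      ((G.incidentEdges (codeTour G d k vm).visited.toFinset).powersetCard (9 * k + 1)).image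
        ((codeTour G d k vm).edges.toFinset ∪ ·) |
    #D = 10 * k}

variable {G d k}

lemma card_treeCodes_le : #(treeCodes G d k) ≤ Fintype.card V * (4 ^ (k - 1) * d ^ (k - 1)) := by
  refine (card_filter_le _ _).trans ?_
  rw [card_product, card_univ]
  refine Nat.mul_le_mul_left _ ((card_filter_card_isSome_le _ _ _).trans ?_)
  rw [← Nat.centralBinom_eq_two_mul_choose]
  exact Nat.mul_le_mul_right _ (Nat.centralBinom_le_four_pow _)

lemma card_witnesses_le (hdeg : ∀ v, G.degree v ≤ d) :
    #(witnesses G d k) ≤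
      Fintype.card V * (4 ^ (k - 1) * d ^ (k - 1) * (d * k).choose (9 * k + 1)) := by
  calc _ ≤ ∑ vm ∈ treeCodes G d k,
        #((G.incidentEdges (codeTour G d k vm).visited.toFinset).powersetCard (9 * k + 1)) :=
        (card_filter_le _ _).trans (card_biUnion_le.trans (sum_le_sum fun _ _ => card_image_le))
    _ ≤ ∑ _vm ∈ treeCodes G d k, (d * k).choose (9 * k + 1) := by
        refine sum_le_sum fun vm hvm => ?_
        rw [card_powersetCard]
        refine Nat.choose_le_choose _ ((G.card_incidentEdges_le hdeg _).trans ?_)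
        exact Nat.mul_le_mul_left d (mem_filter.1 hvm).2
    _ ≤ _ := by
        rw [sum_const, smul_eq_mul, ← mul_assoc]
        exact Nat.mul_le_mul_right _ card_treeCodes_le

lemma card_of_mem_witnesses {D : Finset (Sym2 V)} (hD : D ∈ witnesses G d k) : #D = 10 * k :=
  (mem_filter.1 hD).2

lemma exists_mem_witnesses_subset (hdeg : ∀ v, G.degree v ≤ d) (H : SimpleGraph V)
    [DecidableRel H.Adj] (hHG : H ≤ G) {S : Finset V} (hSk : #S = k)
    (hS : (H.induce (S : Set V)).Connected) (hinc : 10 * k ≤ #(H.incidentEdges S)) :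
    ∃ D ∈ witnesses G d k, ↑D ⊆ H.edgeSet := by
  obtain ⟨⟨v, hv⟩⟩ := hS.nonempty
  obtain ⟨c, hc⟩ := exists_isTreeCode
    (fun x u h => SimpleGraph.exists_labeledNeighbor_eq hdeg (hHG h)) hS hv
  obtain ⟨m, rfl⟩ : ∃ m : Fin (2 * (k - 1)) → Option (Fin d), List.ofFn m = c := by
    have hlen : c.length = 2 * (k - 1) := hSk ▸ hc.length_eq
    exact ⟨_, (List.ofFn_congr hlen c.get).symm.trans (List.ofFn_get c)⟩
  set E := (codeTour G d k (v, m)).edges.toFinset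
  have hE : ↑E ⊆ H.edgeSet := fun e he => (hc.edges_subset e (List.mem_toFinset.1 he)).1
  have hEcard : #E = k - 1 := hSk ▸ hc.card_edges
  have hk : 1 ≤ k := hSk ▸ card_pos.2 ⟨v, hv⟩
  have hsdiff : 9 * k + 1 ≤ #(H.incidentEdges S \ E) := by
    have := le_card_sdiff E (H.incidentEdges S)
    omega
  obtain ⟨F, hF, hFcard⟩ := exists_subset_card_eq hsdiff
  rw [subset_sdiff] at hF
  refine ⟨E ∪ F, mem_filter.2 ⟨mem_biUnion.2 ⟨(v, m), ?_, mem_image.2 ⟨F, ?_, rfl⟩⟩, ?_⟩, ?_⟩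
  · refine mem_filter.2 ⟨mem_product.2 ⟨mem_univ v, mem_filter.2 ⟨mem_univ m, ?_⟩⟩, ?_⟩
    · rw [← List.countP_ofFn, hc.countP_isSome, hSk]
    · exact (congrArg card hc.visited_eq).trans_le hSk.le
  · refine mem_powersetCard.2 ⟨?_, hFcard⟩
    exact hF.1.trans (hc.visited_eq ▸ SimpleGraph.incidentEdges_mono hHG S)
  · rw [card_union_of_disjoint hF.2.symm, hEcard, hFcard]
    omega
  · rw [coe_union]
    exact Set.union_subset hE ((coe_subset.2 hF.1).trans (H.incidentEdges_subset_edgeSet S))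

end Witnesses

section Estimates

open Real

lemma Nat.cast_choose_le_exp_mul_div_pow (n : ℕ) {r : ℕ} (hr : 0 < r) :
    (n.choose r : ℝ) ≤ (exp 1 * n / r) ^ r := by
  have hr' : (0 : ℝ) < r := Nat.cast_pos.2 hr
  have hfact : (r : ℝ) ^ r / r.factorial ≤ exp 1 ^ r := by
    rw [exp_one_pow]
    exact pow_div_factorial_le_exp _ hr'.le r
  calc (n.choose r : ℝ) ≤ n ^ r / r.factorial := Nat.choose_le_pow_div r n
    _ = (n / r) ^ r * ((r : ℝ) ^ r / r.factorial) := by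
        rw [div_pow, mul_div_assoc', div_mul_cancel₀ _ (by positivity)]
    _ ≤ (n / r) ^ r * exp 1 ^ r := by gcongr
    _ = (exp 1 * n / r) ^ r := by ring

lemma exp_one_div_nine_pow_nine_le : (exp 1 / 9) ^ 9 ≤ 1 / 40960 :=
  calc (exp 1 / 9) ^ 9 ≤ (2.7182818286 / 9) ^ 9 := by
        gcongr
        linarith [exp_one_lt_d9]
    _ ≤ 1 / 40960 := by norm_num

lemma cast_choose_le_mul_exp_one_div_nine_pow (d m : ℕ) :
    ((d * (m + 1)).choose (9 * (m + 1) + 1) : ℝ) ≤ (d * (exp 1 / 9)) ^ (9 * m + 10) := by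
  refine (Nat.cast_choose_le_exp_mul_div_pow _ (by omega)).trans
    (pow_le_pow_left₀ (by positivity) ?_ _)
  rw [div_le_iff₀ (by positivity)]
  push_cast
  linarith [mul_nonneg (Nat.cast_nonneg d : (0 : ℝ) ≤ d) (exp_pos 1).le]

/-- The number of candidate edge sets of size `10k` per start vertex, times the probability
bound `(2/d)^(10k)` for each. -/
lemma four_pow_mul_pow_mul_choose_mul_pow_le (d k : ℕ) :
    (4 : ℝ) ^ (k - 1) * d ^ (k - 1) * (d * k).choose (9 * k + 1) * (2 / d) ^ (10 * k)
      ≤ (1 / 10) ^ k := by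
  rcases Nat.eq_zero_or_pos k with rfl | hk
  · simp
  rcases Nat.eq_zero_or_pos d with rfl | hd
  · simp [zero_pow (by omega : 10 * k ≠ 0)]
  obtain ⟨m, rfl⟩ : ∃ m, k = m + 1 := ⟨k - 1, by omega⟩
  set x := exp 1 / 9 with hx
  have hx1 : x ≤ 1 := by
    rw [hx]
    linarith [exp_one_lt_d9]
  calc _ ≤ (4 : ℝ) ^ m * d ^ m * (d * x) ^ (9 * m + 10) * (2 / d) ^ (10 * (m + 1)) := by
        simp only [Nat.add_sub_cancel]
        gcongr
        exact cast_choose_le_mul_exp_one_div_nine_pow d m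
    _ = 4 ^ m * x ^ (9 * m + 10) * 2 ^ (10 * (m + 1))
          * ((d : ℝ) ^ (m + (9 * m + 10)) / d ^ (10 * (m + 1))) := by
        rw [mul_pow, div_pow, pow_add]
        ring
    _ = 4 ^ m * x ^ (9 * m + 10) * 1024 ^ (m + 1) := by
        rw [show m + (9 * m + 10) = 10 * (m + 1) by ring, div_self (by positivity), pow_mul]
        norm_num
    _ ≤ 4 ^ (m + 1) * x ^ (9 * (m + 1)) * 1024 ^ (m + 1) := by
        gcongr ?_ * ?_ * _
        · exact pow_le_pow_right₀ (by norm_num) (by omega)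
        · exact pow_le_pow_of_le_one (by positivity) hx1 (by omega)
    _ = (4 * x ^ 9 * 1024) ^ (m + 1) := by rw [mul_pow, mul_pow, ← pow_mul]
    _ ≤ (1 / 10) ^ (m + 1) := by
        gcongr
        rw [hx]
        linarith [exp_one_div_nine_pow_nine_le]

lemma natCast_mul_inv_ten_pow_ceil_log_le (N : ℕ) :
    (N : ℝ) * (1 / 10) ^ ⌈log N⌉₊ ≤ (N : ℝ)⁻¹ := by
  rcases Nat.eq_zero_or_pos N with rfl | hN
  · simp
  have hN' : (0 : ℝ) < N := Nat.cast_pos.2 hN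
  have hsq : (N : ℝ) ^ 2 ≤ 10 ^ ⌈log N⌉₊ :=
    calc (N : ℝ) ^ 2 = exp (2 * log N) := by
          rw [show (2 : ℝ) * log N = log N + log N by ring, exp_add, exp_log hN', sq]
      _ ≤ exp (2 * ⌈log N⌉₊) := by
          gcongr
          exact Nat.le_ceil _
      _ = exp 2 ^ ⌈log N⌉₊ := by rw [← exp_nat_mul, mul_comm]
      _ ≤ 10 ^ ⌈log N⌉₊ := by
          gcongr
          calc exp 2 = exp 1 ^ 2 := by rw [exp_one_pow]; norm_num
            _ ≤ 2.7182818286 ^ 2 := by gcongr; exact exp_one_lt_d9.le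
            _ ≤ 10 := by norm_num
  rw [one_div, inv_pow, ← div_eq_mul_inv, div_le_iff₀ (by positivity)]
  calc (N : ℝ) = (N : ℝ)⁻¹ * N ^ 2 := by field_simp
    _ ≤ (N : ℝ)⁻¹ * 10 ^ ⌈log N⌉₊ := by gcongr

end Estimates

lemma SimpleGraph.percGraph_le {V : Type*} (G : SimpleGraph V) [DecidableRel G.Adj]
    (ω : Sym2 V → Bool) : G.percGraph ω ≤ G :=
  fun _ _ h => h.1

lemma SimpleGraph.eq_true_of_mem_edgeSet_percGraph {V : Type*} {G : SimpleGraph V}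
    [DecidableRel G.Adj] {ω : Sym2 V → Bool} {e : Sym2 V} (he : e ∈ (G.percGraph ω).edgeSet) :
    ω e = true := by
  induction e with
  | _ a b => exact he.2

section Probability

open Real

variable {V : Type*} [Fintype V] [DecidableEq V] {G : SimpleGraph V} [DecidableRel G.Adj]
  {d : ℕ}

def LargeConnectedSetsSparse (G : SimpleGraph V) [DecidableRel G.Adj] (ω : Sym2 V → Bool) :
    Prop :=
  ∀ S : Finset V, log (Fintype.card V) ≤ #S → ((G.percGraph ω).induce (S : Set V)).Connected →
    epairs (G.percGraph ω) S S + 2 * epairs (G.percGraph ω) S Sᶜ < 20 * #S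

lemma setOf_largeConnectedSetsSparse_compl_subset (hdeg : ∀ v, G.degree v ≤ d) :
    {ω | LargeConnectedSetsSparse G ω}ᶜ ⊆
      ⋃ k ∈ Ico ⌈log (Fintype.card V)⌉₊ (Fintype.card V + 1),
        ⋃ D ∈ witnesses G d k, {ω | ∀ e ∈ D, ω e = true} := by
  intro ω hω
  simp only [LargeConnectedSetsSparse, Set.mem_compl_iff, Set.mem_ofPred_eq, not_forall,
    not_lt] at hω
  obtain ⟨S, hlog, hconn, hmany⟩ := hω
  have hinc := epairs_add_two_mul_epairs_compl_le (G.percGraph ω) S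
  obtain ⟨D, hD, hDsub⟩ := exists_mem_witnesses_subset hdeg (G.percGraph ω) (G.percGraph_le ω)
    rfl hconn (by omega)
  have hS : #S ∈ Ico ⌈log (Fintype.card V)⌉₊ (Fintype.card V + 1) :=
    mem_Ico.2 ⟨Nat.ceil_le.2 hlog, Nat.lt_succ_of_le (card_le_univ S)⟩
  exact Set.mem_biUnion hS (Set.mem_biUnion hD fun e he =>
    SimpleGraph.eq_true_of_mem_edgeSet_percGraph (hDsub he))

lemma card_witnesses_mul_ofReal_pow_le (hdeg : ∀ v, G.degree v ≤ d) {p : ℝ} (hp : p ≤ 2 / d)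
    (k : ℕ) : (#(witnesses G d k) : ℝ≥0∞) * ENNReal.ofReal p ^ (10 * k) ≤
      ENNReal.ofReal (Fintype.card V * (1 / 10) ^ k) := by
  calc (#(witnesses G d k) : ℝ≥0∞) * ENNReal.ofReal p ^ (10 * k)
      ≤ ENNReal.ofReal (Fintype.card V * (4 ^ (k - 1) * d ^ (k - 1) * (d * k).choose (9 * k + 1)))
        * ENNReal.ofReal ((2 / d) ^ (10 * k)) := by
        rw [ENNReal.ofReal_pow (by positivity)]
        gcongr
        exact_mod_cast card_witnesses_le hdeg
    _ = ENNReal.ofReal (Fintype.card V * (4 ^ (k - 1) * d ^ (k - 1) * (d * k).choose (9 * k + 1)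
        * (2 / d) ^ (10 * k))) := by
        rw [← ENNReal.ofReal_mul (by positivity), mul_assoc]
    _ ≤ ENNReal.ofReal (Fintype.card V * (1 / 10) ^ k) := by
        gcongr
        exact four_pow_mul_pow_mul_choose_mul_pow_le d k

theorem percMeasure_setOf_largeConnectedSetsSparse_compl_le (hdeg : ∀ v, G.degree v ≤ d)
    {p : ℝ} (hp : p ≤ 2 / d) :
    percMeasure V p {ω | LargeConnectedSetsSparse G ω}ᶜ ≤
      ENNReal.ofReal (10 / 9 * (Fintype.card V : ℝ)⁻¹) := by
  set N := Fintype.card V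
  set sizes := Ico ⌈log N⌉₊ (N + 1)
  calc _ ≤ percMeasure V p (⋃ k ∈ sizes, ⋃ D ∈ witnesses G d k, {ω | ∀ e ∈ D, ω e = true}) :=
        measure_mono (setOf_largeConnectedSetsSparse_compl_subset hdeg)
    _ ≤ ∑ k ∈ sizes, percMeasure V p (⋃ D ∈ witnesses G d k, {ω | ∀ e ∈ D, ω e = true}) :=
        measure_biUnion_finset_le _ _
    _ ≤ ∑ k ∈ sizes, ENNReal.ofReal (N * (1 / 10) ^ k) :=
        sum_le_sum fun k _ => (percMeasure_biUnion_le p _ _ fun _ => card_of_mem_witnesses).trans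
          (card_witnesses_mul_ofReal_pow_le hdeg hp k)
    _ = ENNReal.ofReal (N * ∑ k ∈ sizes, (1 / 10) ^ k) := by
        rw [mul_sum, ENNReal.ofReal_sum_of_nonneg fun k _ => by positivity]
    _ ≤ ENNReal.ofReal (10 / 9 * (N * (1 / 10) ^ ⌈log N⌉₊)) := by
        gcongr ENNReal.ofReal ?_
        calc (N : ℝ) * ∑ k ∈ sizes, (1 / 10) ^ k ≤ N * ((1 / 10) ^ ⌈log N⌉₊ / (1 - 1 / 10)) := by
              gcongr
              exact geom_sum_Ico_le_of_lt_one (by norm_num) (by norm_num)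
          _ = 10 / 9 * (N * (1 / 10) ^ ⌈log N⌉₊) := by ring
    _ ≤ ENNReal.ofReal (10 / 9 * (N : ℝ)⁻¹) := by
        gcongr
        exact natCast_mul_inv_ten_pow_ceil_log_le N

end Probability

lemma tendsto_measure_nhds_one_of_compl_le {Ω : ℕ → Type*} [∀ n, MeasurableSpace (Ω n)]
    {μ : ∀ n, Measure (Ω n)} [∀ n, IsProbabilityMeasure (μ n)] {s : ∀ n, Set (Ω n)}
    (hs : ∀ n, MeasurableSet (s n)) {b : ℕ → ℝ≥0∞} (hb : Tendsto b atTop (nhds 0))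
    (hsb : ∀ n, μ n (s n)ᶜ ≤ b n) : Tendsto (fun n => μ n (s n)) atTop (nhds 1) := by
  have hcompl : Tendsto (fun n => μ n (s n)ᶜ) atTop (nhds 0) :=
    tendsto_of_tendsto_of_tendsto_of_le_of_le tendsto_const_nhds hb (fun _ => bot_le) hsb
  simpa only [prob_compl_eq_one_sub (hs _), ENNReal.sub_sub_cancel ENNReal.one_ne_top prob_le_one,
    tsub_zero] using ENNReal.Tendsto.sub tendsto_const_nhds hcompl (Or.inl ENNReal.one_ne_top)

theorem stmt4 :
    ∀ (G : ∀ n : ℕ, SimpleGraph (Fin n)) (_ : ∀ n, DecidableRel (G n).Adj)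
      (d : ℕ → ℕ) (p : ℕ → ℝ),
    (∀ n, (G n).IsRegularOfDegree (d n)) →
    (∀ n, 0 ≤ p n ∧ p n ≤ 2 / (d n : ℝ)) →
    Tendsto (fun n => percMeasure (Fin n) (p n)
      {ω | ∀ S : Finset (Fin n), Real.log n ≤ (S.card : ℝ) →
            (SimpleGraph.induce (↑S) ((G n).percGraph ω)).Connected →
            epairs ((G n).percGraph ω) S S + 2 * epairs ((G n).percGraph ω) S Sᶜ
              < 20 * S.card})
      atTop (nhds 1) := by
  intro G _ d p hreg hp
  refine tendsto_measure_nhds_one_of_compl_le (fun n => MeasurableSet.of_discrete) ?_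
    fun n => by
      simpa [LargeConnectedSetsSparse] using
        percMeasure_setOf_largeConnectedSetsSparse_compl_le (fun v => (hreg n v).le) (hp n).2
  simpa using ENNReal.tendsto_ofReal ((tendsto_inv_atTop_nhds_zero_nat (𝕜 := ℝ)).const_mul (10 / 9))
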